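/- arXiv:2505.10981 — 4 statements merged into one kernel-verified Lean document; each statement's English description precedes it below -/
import Mathlib

section
/- If p_1 > p_j for every j ≠ 1 (i.e., answer a_1 is the unique most likely answer; an 'easy question'), then the majority-vote success probability Pr(a_1 | p; N) tends to 1 as N → ∞. -/
/-!
A Chernoff bound. Answer `a₁` is returned with probability one unless some `a_j`, `j ≠ 1`,
occurs at least as often as `a₁`. Weighting each sample by `t < 1` if it is `a₁`, by `t⁻¹` if it
is `a_j` and by `1` otherwise gives every `ω` the weight `t ^ (X₁ - X_j)`, which is `≥ 1` on that
event; so its probability is at most `(∑ k, p_k w_k) ^ N`, and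
`∑ k, p_k w_k = 1 - (1 - t) t⁻¹ (p₁ t - p_j) < 1` as soon as `p_j / p₁ < t < 1`.
-/

open Finset Filter

/-- Number of the `N` samples in `ω` equal to answer `j`. -/
def count {m N : ℕ} (ω : Fin N → Fin m) (j : Fin m) : ℕ :=
  (Finset.univ.filter fun i => ω i = j).card

/-- The set `J(ω)` of answers achieving the maximal count among the samples `ω`. -/
def maxSet {m N : ℕ} (ω : Fin N → Fin m) : Finset (Fin m) :=
  Finset.univ.filter fun j => ∀ k, count ω k ≤ count ω j

/-- Majority-vote probability that answer `l` is returned after `N` i.i.d. samples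
drawn from `p`: the most frequent answer is chosen, ties broken uniformly. -/
noncomputable def majorityProb {m : ℕ} (p : Fin m → ℝ) (N : ℕ) (l : Fin m) : ℝ :=
  ∑ ω : Fin N → Fin m, (∏ i, p (ω i)) *
    (if l ∈ maxSet ω then (1 : ℝ) / ((maxSet ω).card : ℝ) else 0)

section Sampling

variable {m N : ℕ}

lemma prod_apply_eq_prod_pow_count (ω : Fin N → Fin m) (f : Fin m → ℝ) :
    ∏ i, f (ω i) = ∏ k, f k ^ count ω k := by
  rw [← prod_fiberwise' univ ω f]
  exact prod_congr rfl fun k _ => by rw [prod_const]; rfl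

lemma sum_prod_apply_eq_one {p : Fin m → ℝ} (hsum : ∑ j, p j = 1) :
    ∑ ω : Fin N → Fin m, ∏ i, p (ω i) = 1 := by
  rw [← Fintype.sum_pow, hsum, one_pow]

lemma maxSet_eq_singleton {ω : Fin N → Fin m} {l : Fin m}
    (h : ∀ j, j ≠ l → count ω j < count ω l) : maxSet ω = {l} := by
  ext j
  simp only [maxSet, mem_filter, mem_univ, true_and, mem_singleton]
  constructor
  · intro hj
    by_contra hjl
    exact (h j hjl).not_ge (hj l)
  · rintro rfl k
    rcases eq_or_ne k j with rfl | hk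
    · exact le_rfl
    · exact (h k hk).le

lemma tieBreak_nonneg (ω : Fin N → Fin m) (l : Fin m) :
    0 ≤ if l ∈ maxSet ω then (1 : ℝ) / ((maxSet ω).card : ℝ) else 0 := by
  split_ifs <;> positivity

lemma tieBreak_le_one (ω : Fin N → Fin m) (l : Fin m) :
    (if l ∈ maxSet ω then (1 : ℝ) / ((maxSet ω).card : ℝ) else 0) ≤ 1 := by
  split_ifs with h
  · exact div_le_one_of_le₀ (Nat.one_le_cast.2 (card_pos.2 ⟨l, h⟩)) (Nat.cast_nonneg _)
  · exact zero_le_one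

end Sampling

section Majority

variable {m : ℕ} {p : Fin m → ℝ}

lemma majorityProb_le_one (hnn : ∀ j, 0 ≤ p j) (hsum : ∑ j, p j = 1) (N : ℕ) (l : Fin m) :
    majorityProb p N l ≤ 1 := by
  calc majorityProb p N l ≤ ∑ ω : Fin N → Fin m, ∏ i, p (ω i) :=
        sum_le_sum fun ω _ => mul_le_of_le_one_right
          (prod_nonneg fun i _ => hnn (ω i)) (tieBreak_le_one ω l)
    _ = 1 := sum_prod_apply_eq_one hsum

def probCountLe (p : Fin m → ℝ) (N : ℕ) (l j : Fin m) : ℝ :=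
  ∑ ω ∈ univ.filter fun ω : Fin N → Fin m => count ω l ≤ count ω j, ∏ i, p (ω i)

lemma probCountLe_nonneg (hnn : ∀ j, 0 ≤ p j) (N : ℕ) (l j : Fin m) :
    0 ≤ probCountLe p N l j :=
  sum_nonneg fun ω _ => prod_nonneg fun i _ => hnn (ω i)

lemma one_sub_majorityProb_le (hnn : ∀ j, 0 ≤ p j) (hsum : ∑ j, p j = 1) (N : ℕ)
    (l : Fin m) :
    1 - majorityProb p N l ≤ ∑ j ∈ univ.erase l, probCountLe p N l j := by
  have pointwise : ∀ ω : Fin N → Fin m,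
      (∏ i, p (ω i)) * (1 - if l ∈ maxSet ω then (1 : ℝ) / ((maxSet ω).card : ℝ) else 0) ≤
        ∑ j ∈ univ.erase l, if count ω l ≤ count ω j then ∏ i, p (ω i) else 0 := by
    intro ω
    have hprod : 0 ≤ ∏ i, p (ω i) := prod_nonneg fun i _ => hnn (ω i)
    have hterms : ∀ j ∈ univ.erase l,
        0 ≤ if count ω l ≤ count ω j then ∏ i, p (ω i) else 0 := fun j _ => by
      split_ifs <;> first | exact hprod | exact le_rfl
    by_cases hwin : ∀ j, j ≠ l → count ω j < count ω l
    · simp only [maxSet_eq_singleton hwin, mem_singleton, card_singleton, if_true,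
        Nat.cast_one, div_one, sub_self, mul_zero]
      exact sum_nonneg hterms
    · push Not at hwin
      obtain ⟨j, hjl, hcount⟩ := hwin
      calc (∏ i, p (ω i)) * (1 - _) ≤ ∏ i, p (ω i) :=
            mul_le_of_le_one_right hprod (sub_le_self _ (tieBreak_nonneg ω l))
        _ = if count ω l ≤ count ω j then ∏ i, p (ω i) else 0 := (if_pos hcount).symm
        _ ≤ _ := single_le_sum hterms (mem_erase.2 ⟨hjl, mem_univ j⟩)
  calc 1 - majorityProb p N l
      = ∑ ω : Fin N → Fin m, (∏ i, p (ω i)) *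
          (1 - if l ∈ maxSet ω then (1 : ℝ) / ((maxSet ω).card : ℝ) else 0) := by
        conv_lhs => rw [← sum_prod_apply_eq_one (N := N) hsum]
        rw [majorityProb, ← sum_sub_distrib]
        exact sum_congr rfl fun ω _ => by ring
    _ ≤ ∑ ω : Fin N → Fin m, ∑ j ∈ univ.erase l,
          if count ω l ≤ count ω j then ∏ i, p (ω i) else 0 :=
        sum_le_sum fun ω _ => pointwise ω
    _ = ∑ j ∈ univ.erase l, probCountLe p N l j := by
        rw [sum_comm]
        exact sum_congr rfl fun j _ => (sum_filter _ _).symm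

end Majority

section Tilting

variable {m N : ℕ} {p : Fin m → ℝ} {l j : Fin m} {t : ℝ}

noncomputable def tilt (l j : Fin m) (t : ℝ) (k : Fin m) : ℝ :=
  if k = l then t else if k = j then t⁻¹ else 1

lemma tilt_pos (l j : Fin m) (ht : 0 < t) (k : Fin m) : 0 < tilt l j t k := by
  unfold tilt
  split_ifs
  exacts [ht, inv_pos.2 ht, one_pos]

lemma prod_tilt (hlj : l ≠ j) (ω : Fin N → Fin m) :
    ∏ i, tilt l j t (ω i) = t ^ count ω l * t⁻¹ ^ count ω j := by
  rw [prod_apply_eq_prod_pow_count, Fintype.prod_eq_mul l j hlj fun k hk => by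
    simp [tilt, hk.1, hk.2]]
  simp [tilt, hlj.symm]

lemma one_le_prod_tilt (hlj : l ≠ j) (ht0 : 0 < t) (ht1 : t ≤ 1) {ω : Fin N → Fin m}
    (hcount : count ω l ≤ count ω j) : 1 ≤ ∏ i, tilt l j t (ω i) := by
  rw [prod_tilt hlj]
  calc (1 : ℝ) = t ^ count ω j * t⁻¹ ^ count ω j := by
        rw [← mul_pow, mul_inv_cancel₀ ht0.ne', one_pow]
    _ ≤ t ^ count ω l * t⁻¹ ^ count ω j :=
        mul_le_mul_of_nonneg_right (pow_le_pow_of_le_one ht0.le ht1 hcount) (by positivity)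

lemma probCountLe_le_pow (hnn : ∀ k, 0 ≤ p k) (hlj : l ≠ j) (ht0 : 0 < t) (ht1 : t ≤ 1) :
    probCountLe p N l j ≤ (∑ k, p k * tilt l j t k) ^ N := by
  unfold probCountLe
  calc _ ≤ ∑ ω ∈ univ.filter fun ω : Fin N → Fin m => count ω l ≤ count ω j,
          ∏ i, p (ω i) * tilt l j t (ω i) := by
        refine sum_le_sum fun ω hω => ?_
        rw [prod_mul_distrib]
        exact le_mul_of_one_le_right (prod_nonneg fun i _ => hnn _)
          (one_le_prod_tilt hlj ht0 ht1 (mem_filter.1 hω).2)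
    _ ≤ ∑ ω : Fin N → Fin m, ∏ i, p (ω i) * tilt l j t (ω i) :=
        sum_le_sum_of_subset_of_nonneg (filter_subset _ _) fun ω _ _ =>
          prod_nonneg fun i _ => mul_nonneg (hnn _) (tilt_pos l j ht0 _).le
    _ = (∑ k, p k * tilt l j t k) ^ N :=
        (Fintype.sum_pow (fun k => p k * tilt l j t k) N).symm

lemma sum_mul_tilt_lt_one (hsum : ∑ k, p k = 1) (hlj : l ≠ j) (ht0 : 0 < t) (ht1 : t < 1)
    (hjt : p j < p l * t) : ∑ k, p k * tilt l j t k < 1 := by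
  have hshift : ∑ k, p k * tilt l j t k - ∑ k, p k = p l * (t - 1) + p j * (t⁻¹ - 1) := by
    rw [← sum_sub_distrib, Fintype.sum_eq_add l j hlj fun k hk => by simp [tilt, hk.1, hk.2]]
    simp only [tilt, ↓reduceIte, if_neg hlj.symm]
    ring
  have hfactor : p l * (t - 1) + p j * (t⁻¹ - 1) = (1 - t) * t⁻¹ * (p j - p l * t) := by
    field_simp
    ring
  have hneg : (1 - t) * t⁻¹ * (p j - p l * t) < 0 :=
    mul_neg_of_pos_of_neg (mul_pos (sub_pos.2 ht1) (inv_pos.2 ht0)) (sub_neg.2 hjt)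
  linarith

lemma tendsto_probCountLe_zero (hnn : ∀ k, 0 ≤ p k) (hsum : ∑ k, p k = 1)
    (hjl : p j < p l) : Tendsto (fun N => probCountLe p N l j) atTop (nhds 0) := by
  have hl : 0 < p l := (hnn j).trans_lt hjl
  have hlj : l ≠ j := fun h => hjl.ne (congrArg p h.symm)
  -- the midpoint of `(p j / p l, 1)`
  set t := (p j + p l) / (2 * p l)
  have ht0 : 0 < t := by have := hnn j; positivity
  have ht1 : t < 1 := by rw [div_lt_one (by positivity)]; linarith
  have hjt : p j < p l * t := by
    rw [mul_div_assoc', lt_div_iff₀ (by positivity)]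
    nlinarith
  have hbase : 0 ≤ ∑ k, p k * tilt l j t k :=
    sum_nonneg fun k _ => mul_nonneg (hnn k) (tilt_pos l j ht0 k).le
  exact squeeze_zero (fun N => probCountLe_nonneg hnn N l j)
    (fun N => probCountLe_le_pow hnn hlj ht0 ht1.le)
    (tendsto_pow_atTop_nhds_zero_of_lt_one hbase (sum_mul_tilt_lt_one hsum hlj ht0 ht1 hjt))

end Tilting

/-- For an easy question (`a_1` is the unique most likely answer),
the majority-vote success probability tends to `1` as `N → ∞`. -/
theorem easy_question_tendsto_one {m : ℕ} (hm : 0 < m) (p : Fin m → ℝ)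
    (hnn : ∀ j, 0 ≤ p j) (hsum : ∑ j, p j = 1)
    (heasy : ∀ j, j ≠ (⟨0, hm⟩ : Fin m) → p j < p ⟨0, hm⟩) :
    Tendsto (fun N => majorityProb p N ⟨0, hm⟩) atTop (nhds 1) := by
  set l : Fin m := ⟨0, hm⟩
  have hfail : Tendsto (fun N => ∑ j ∈ univ.erase l, probCountLe p N l j) atTop (nhds 0) := by
    simpa only [sum_const_zero] using tendsto_finsetSum _ fun j hj =>
      tendsto_probCountLe_zero hnn hsum (heasy j (ne_of_mem_erase hj))
  refine tendsto_of_tendsto_of_tendsto_of_le_of_le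
    (by simpa only [sub_zero] using tendsto_const_nhds.sub hfail) tendsto_const_nhds
    (fun N => ?_) (fun N => majorityProb_le_one hnn hsum N l)
  linarith [one_sub_majorityProb_le hnn hsum N l]
end

section
/- If p_1 > p_j for every j ≠ 1 (an 'easy question'), then the majority-vote success probability Pr(a_1 | p; N) is non-decreasing as a function of the sample size N. -/
open Finset Filter

/-!
Add one sample `x` to `ω`, whose leader set is `J`. If `x ∈ J`, then `x` becomes the sole winner:
the chance of `l` moves from its tie-break share `[l ∈ J] / |J|` to `[x = l]`, and the
`p`-weighted sum of this change over `x ∈ J` is nonnegative because `p l` is maximal. If `x` is a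
runner-up (one vote behind `J`), it joins the leaders: this costs `l` the amount
`1 / (|J| (|J| + 1))` when `l ∈ J`, and gains it `1 / (|J| + 1)` when `x = l`. Otherwise nothing
changes. The runner-up gains and losses cancel: swapping the labels `l` and `x` exchanges the
samples where `l` leads and `x` trails by one with those where `x` leads and `l` trails, and
`p l · P(swap ∘ ω) = p x · P(ω)` because after adding `x` both labels have the same count.
-/

variable {m N : ℕ}

theorem mem_maxSet {ω : Fin N → Fin m} {j : Fin m} :
    j ∈ maxSet ω ↔ ∀ k, count ω k ≤ count ω j := by
  simp [maxSet]

theorem maxSet_nonempty [Nonempty (Fin m)] (ω : Fin N → Fin m) : (maxSet ω).Nonempty := by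
  obtain ⟨j, -, hj⟩ := exists_max_image univ (count ω) univ_nonempty
  exact ⟨j, mem_maxSet.2 fun k => hj k (mem_univ k)⟩

theorem count_cons (x : Fin m) (ω : Fin N → Fin m) (j : Fin m) :
    count (Fin.cons x ω : Fin (N + 1) → Fin m) j = count ω j + if x = j then 1 else 0 := by
  simp only [count, card_filter, Fin.sum_univ_succ, Fin.cons_zero, Fin.cons_succ]
  exact add_comm _ _

theorem count_perm_comp (σ : Equiv.Perm (Fin m)) (ω : Fin N → Fin m) (j : Fin m) :
    count (σ ∘ ω) j = count ω (σ.symm j) := by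
  simp only [count, Function.comp_apply, ← Equiv.eq_symm_apply]

theorem mem_maxSet_perm_comp {σ : Equiv.Perm (Fin m)} {ω : Fin N → Fin m} {j : Fin m} :
    j ∈ maxSet (σ ∘ ω) ↔ σ.symm j ∈ maxSet ω := by
  simp only [mem_maxSet, count_perm_comp]
  exact σ.symm.forall_congr_right (q := fun k => count ω k ≤ _)

theorem card_maxSet_perm_comp (σ : Equiv.Perm (Fin m)) (ω : Fin N → Fin m) :
    #(maxSet (σ ∘ ω)) = #(maxSet ω) := by
  have : maxSet (σ ∘ ω) = (maxSet ω).map σ.toEmbedding := by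
    ext j
    rw [mem_maxSet_perm_comp, mem_map_equiv]
  rw [this, card_map]

theorem mem_maxSet_cons_self {x : Fin m} {ω : Fin N → Fin m} :
    x ∈ maxSet (Fin.cons x ω : Fin (N + 1) → Fin m) ↔ ∀ k, count ω k ≤ count ω x + 1 := by
  simp only [mem_maxSet, count_cons, ↓reduceIte]
  refine forall_congr' fun k => ?_
  rcases eq_or_ne x k with rfl | h
  · simp
  · simp [h]

theorem maxSet_cons_of_mem {x : Fin m} {ω : Fin N → Fin m} (hx : x ∈ maxSet ω) :
    maxSet (Fin.cons x ω : Fin (N + 1) → Fin m) = {x} := by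
  rw [mem_maxSet] at hx
  ext j
  simp only [mem_maxSet, count_cons, mem_singleton]
  constructor
  · intro h
    have := h x
    have := hx j
    grind
  · rintro rfl k
    have := hx k
    grind

theorem maxSet_cons_of_notMem_maxSet_cons {x : Fin m} {ω : Fin N → Fin m}
    (hx : x ∉ maxSet (Fin.cons x ω : Fin (N + 1) → Fin m)) :
    maxSet (Fin.cons x ω : Fin (N + 1) → Fin m) = maxSet ω := by
  obtain ⟨k₀, hk₀⟩ : ∃ k, count ω x + 1 < count ω k := by
    simpa [mem_maxSet_cons_self] using hx
  ext j
  simp only [mem_maxSet, count_cons]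
  constructor
  · intro h k
    have := h k
    have := h k₀
    grind
  · intro h k
    have := h k
    have := h k₀
    grind

/-- The answers outside `maxSet ω` that would tie for the lead with one more vote. -/
def runnerUps (ω : Fin N → Fin m) : Finset (Fin m) :=
  univ.filter fun x => x ∉ maxSet ω ∧ x ∈ maxSet (Fin.cons x ω : Fin (N + 1) → Fin m)

theorem mem_runnerUps {ω : Fin N → Fin m} {x : Fin m} :
    x ∈ runnerUps ω ↔ x ∉ maxSet ω ∧ x ∈ maxSet (Fin.cons x ω : Fin (N + 1) → Fin m) := by
  simp [runnerUps]

theorem disjoint_maxSet_runnerUps (ω : Fin N → Fin m) : Disjoint (maxSet ω) (runnerUps ω) :=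
  disjoint_left.2 fun _ hJ hR => (mem_runnerUps.1 hR).1 hJ

theorem maxSet_cons_of_mem_runnerUps {x : Fin m} {ω : Fin N → Fin m} (hx : x ∈ runnerUps ω) :
    maxSet (Fin.cons x ω : Fin (N + 1) → Fin m) = insert x (maxSet ω) := by
  obtain ⟨hx, hnear⟩ := mem_runnerUps.1 hx
  rw [mem_maxSet_cons_self] at hnear
  obtain ⟨k₀, hk₀⟩ : ∃ k, count ω x < count ω k := by simpa [mem_maxSet] using hx
  ext j
  simp only [mem_maxSet, count_cons, mem_insert]
  constructor
  · intro h
    by_cases hj : j = x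
    · exact Or.inl hj
    · right
      intro k
      have := h k
      have := h x
      grind
  · rintro (rfl | h) k
    · have := hnear k
      grind
    · have := h k
      have := h k₀
      grind

theorem count_eq_succ_of_mem_maxSet_of_mem_runnerUps {l x : Fin m} {ω : Fin N → Fin m}
    (hl : l ∈ maxSet ω) (hx : x ∈ runnerUps ω) : count ω l = count ω x + 1 := by
  obtain ⟨hx, hnear⟩ := mem_runnerUps.1 hx
  rw [mem_maxSet_cons_self] at hnear
  obtain ⟨k, hk⟩ : ∃ k, count ω x < count ω k := by simpa [mem_maxSet] using hx
  rw [mem_maxSet] at hl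
  have := hl k
  have := hl x
  have := hnear l
  omega

theorem mem_runnerUps_perm_comp {σ : Equiv.Perm (Fin m)} {ω : Fin N → Fin m} {x : Fin m} :
    x ∈ runnerUps (σ ∘ ω) ↔ σ.symm x ∈ runnerUps ω := by
  have hcons : (Fin.cons x (σ ∘ ω) : Fin (N + 1) → Fin m) = σ ∘ Fin.cons (σ.symm x) ω := by
    rw [Fin.comp_cons, Equiv.apply_symm_apply]
  rw [mem_runnerUps, mem_runnerUps, hcons, mem_maxSet_perm_comp, mem_maxSet_perm_comp]

noncomputable def weight (p : Fin m → ℝ) (ω : Fin N → Fin m) : ℝ :=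
  ∏ i, p (ω i)

theorem weight_nonneg {p : Fin m → ℝ} (hnn : ∀ j, 0 ≤ p j) (ω : Fin N → Fin m) :
    0 ≤ weight p ω :=
  prod_nonneg fun i _ => hnn (ω i)

theorem weight_eq_prod_pow_count (p : Fin m → ℝ) (ω : Fin N → Fin m) :
    weight p ω = ∏ j, p j ^ count ω j := by
  rw [weight, ← prod_fiberwise' univ ω p]
  simp only [count, prod_const]

theorem weight_cons (p : Fin m → ℝ) (x : Fin m) (ω : Fin N → Fin m) :
    weight p (Fin.cons x ω : Fin (N + 1) → Fin m) = p x * weight p ω := by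
  simp only [weight, Fin.prod_univ_succ, Fin.cons_zero, Fin.cons_succ]

theorem weight_swap_comp_of_count_eq (p : Fin m → ℝ) {a b : Fin m} {ω : Fin N → Fin m}
    (h : count ω a = count ω b) : weight p (Equiv.swap a b ∘ ω) = weight p ω := by
  have hcount : count (Equiv.swap a b ∘ ω) = count ω := by
    funext j
    rw [count_perm_comp, Equiv.symm_swap, Equiv.swap_apply_def]
    split_ifs with ha hb
    · rw [ha, h]
    · rw [hb, h]
    · rfl
  simp only [weight_eq_prod_pow_count, hcount]

theorem weight_swap_comp_mul {p : Fin m → ℝ} {l x : Fin m} {ω : Fin N → Fin m}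
    (hl : l ∈ maxSet ω) (hx : x ∈ runnerUps ω) :
    weight p (Equiv.swap l x ∘ ω) * p l = weight p ω * p x := by
  have hxl : x ≠ l := fun h => (mem_runnerUps.1 hx).1 (h ▸ hl)
  have hcount : count (Fin.cons x ω : Fin (N + 1) → Fin m) l
      = count (Fin.cons x ω : Fin (N + 1) → Fin m) x := by
    simp [count_cons, hxl, count_eq_succ_of_mem_maxSet_of_mem_runnerUps hl hx]
  calc weight p (Equiv.swap l x ∘ ω) * p l
      = weight p (Equiv.swap l x ∘ (Fin.cons x ω : Fin (N + 1) → Fin m)) := by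
        rw [Fin.comp_cons, Equiv.swap_apply_right, weight_cons, mul_comm]
    _ = weight p ω * p x := by
        rw [weight_swap_comp_of_count_eq p hcount, weight_cons, mul_comm]

noncomputable def share (l : Fin m) (ω : Fin N → Fin m) : ℝ :=
  if l ∈ maxSet ω then 1 / (#(maxSet ω) : ℝ) else 0

theorem share_cons_of_mem {l x : Fin m} {ω : Fin N → Fin m} (hx : x ∈ maxSet ω) :
    share l (Fin.cons x ω : Fin (N + 1) → Fin m) = if x = l then 1 else 0 := by
  simp [share, maxSet_cons_of_mem hx, eq_comm]

theorem share_cons_of_notMem_maxSet_cons {l x : Fin m} {ω : Fin N → Fin m}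
    (hx : x ∉ maxSet (Fin.cons x ω : Fin (N + 1) → Fin m)) :
    share l (Fin.cons x ω : Fin (N + 1) → Fin m) = share l ω := by
  rw [share, share, maxSet_cons_of_notMem_maxSet_cons hx]

theorem share_cons_sub_of_mem_runnerUps {l x : Fin m} {ω : Fin N → Fin m}
    (hx : x ∈ runnerUps ω) :
    share l (Fin.cons x ω : Fin (N + 1) → Fin m) - share l ω
      = ((if x = l then 1 else 0) - share l ω) / (#(maxSet ω) + 1) := by
  have hxJ : x ∉ maxSet ω := (mem_runnerUps.1 hx).1
  rw [share, share, maxSet_cons_of_mem_runnerUps hx, card_insert_of_notMem hxJ]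
  simp only [mem_insert, Nat.cast_succ]
  rcases eq_or_ne x l with rfl | hxl
  · simp [hxJ]
  by_cases hl : l ∈ maxSet ω
  · have hcard : (#(maxSet ω) : ℝ) ≠ 0 := by exact_mod_cast (card_pos.2 ⟨l, hl⟩).ne'
    simp only [hl, hxl.symm, hxl, or_true, if_true, if_false]
    field_simp
    ring
  · simp [hl, hxl.symm, hxl]

theorem sum_mul_share_cons_sub (p : Fin m → ℝ) (l : Fin m) (ω : Fin N → Fin m) :
    ∑ x, p x * (share l (Fin.cons x ω : Fin (N + 1) → Fin m) - share l ω)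
      = ∑ x ∈ maxSet ω, p x * ((if x = l then 1 else 0) - share l ω)
        + (∑ x ∈ runnerUps ω, p x * ((if x = l then 1 else 0) - share l ω))
          / (#(maxSet ω) + 1) := by
  rw [← sum_subset (subset_univ (maxSet ω ∪ runnerUps ω)),
    sum_union (disjoint_maxSet_runnerUps ω), sum_div]
  · refine congrArg₂ (· + ·) (sum_congr rfl fun x hx => ?_) (sum_congr rfl fun x hx => ?_)
    · rw [share_cons_of_mem hx]
    · rw [share_cons_sub_of_mem_runnerUps hx, mul_div_assoc]
  · intro x _ hx
    have hx' : x ∉ maxSet (Fin.cons x ω : Fin (N + 1) → Fin m) := fun h =>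
      hx (mem_union_right _ (mem_runnerUps.2 ⟨fun hJ => hx (mem_union_left _ hJ), h⟩))
    rw [share_cons_of_notMem_maxSet_cons hx', sub_self, mul_zero]

theorem sum_maxSet_mul_sub_share_nonneg {p : Fin m → ℝ} {l : Fin m} (hmax : ∀ j, p j ≤ p l)
    (ω : Fin N → Fin m) :
    0 ≤ ∑ x ∈ maxSet ω, p x * ((if x = l then 1 else 0) - share l ω) := by
  by_cases hl : l ∈ maxSet ω
  · have hcard : (0 : ℝ) < #(maxSet ω) := by exact_mod_cast card_pos.2 ⟨l, hl⟩
    have havg : ∑ x ∈ maxSet ω, p x ≤ #(maxSet ω) * p l := by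
      simpa using sum_le_card_nsmul (maxSet ω) p (p l) fun x _ => hmax x
    simp only [share, hl, if_true, mul_sub, mul_ite, mul_one, mul_zero, sum_sub_distrib,
      sum_ite_eq', ← sum_mul, sub_nonneg]
    rw [mul_one_div, div_le_iff₀ hcard]
    linarith
  · refine (sum_eq_zero fun x hx => ?_).ge
    rw [if_neg (ne_of_mem_of_not_mem hx hl), share, if_neg hl, sub_self, mul_zero]

theorem sum_runnerUps_maxSet_swap (p : Fin m → ℝ) (l x : Fin m) (f : ℕ → ℝ) :
    ∑ ω : Fin N → Fin m,
        (if l ∈ runnerUps ω ∧ x ∈ maxSet ω then weight p ω * p l * f #(maxSet ω) else 0)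
      = ∑ ω : Fin N → Fin m,
        (if x ∈ runnerUps ω ∧ l ∈ maxSet ω then weight p ω * p x * f #(maxSet ω) else 0) := by
  have hinv : Function.Involutive (Equiv.swap l x ∘ · : (Fin N → Fin m) → (Fin N → Fin m)) :=
    fun ω => funext fun i => Equiv.swap_apply_self l x (ω i)
  refine (Fintype.sum_bijective _ hinv.bijective _ _ fun ω => ?_).symm
  simp only [mem_maxSet_perm_comp, mem_runnerUps_perm_comp, card_maxSet_perm_comp,
    Equiv.symm_swap, Equiv.swap_apply_left, Equiv.swap_apply_right]
  split_ifs with h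
  · rw [weight_swap_comp_mul h.2 h.1]
  · rfl

/-- The gain of `l` as a runner-up is spread evenly over the leaders, so that it pairs with the
losses of `l` as a leader under the swap of labels. -/
theorem weight_mul_sum_runnerUps_eq [Nonempty (Fin m)] (p : Fin m → ℝ) (l : Fin m)
    (ω : Fin N → Fin m) :
    weight p ω * ((∑ x ∈ runnerUps ω, p x * ((if x = l then 1 else 0) - share l ω))
        / (#(maxSet ω) + 1))
      = ∑ x, ((if l ∈ runnerUps ω ∧ x ∈ maxSet ω then
            weight p ω * p l * (1 / (#(maxSet ω) * (#(maxSet ω) + 1))) else 0)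
          - (if x ∈ runnerUps ω ∧ l ∈ maxSet ω then
            weight p ω * p x * (1 / (#(maxSet ω) * (#(maxSet ω) + 1))) else 0)) := by
  have hcard : (#(maxSet ω) : ℝ) ≠ 0 := by exact_mod_cast (maxSet_nonempty ω).card_pos.ne'
  simp only [mul_sub, mul_ite, mul_one, mul_zero, sum_sub_distrib, sum_ite_eq', ite_and,
    ← sum_filter, share]
  by_cases hl : l ∈ maxSet ω
  · have hlR : l ∉ runnerUps ω := fun h => (mem_runnerUps.1 h).1 hl
    simp only [hl, hlR, if_false, filter_true, filter_false, filter_empty, sum_empty,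
      filter_mem_eq_inter, univ_inter, ← sum_mul, ← mul_sum]
    field_simp
    ring
  · simp only [hl, filter_false, sum_empty]
    by_cases hlR : l ∈ runnerUps ω
    · simp only [hlR, if_true, filter_true, filter_mem_eq_inter, univ_inter, sum_const,
        nsmul_eq_mul]
      field_simp
      ring
    · simp [hlR]

theorem sum_weight_mul_sum_runnerUps_eq_zero [Nonempty (Fin m)] (p : Fin m → ℝ) (l : Fin m) :
    ∑ ω : Fin N → Fin m, weight p ω *
        ((∑ x ∈ runnerUps ω, p x * ((if x = l then 1 else 0) - share l ω))
          / (#(maxSet ω) + 1)) = 0 := by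
  rw [sum_congr rfl fun ω _ => weight_mul_sum_runnerUps_eq p l ω, sum_comm]
  refine sum_eq_zero fun x _ => ?_
  rw [sum_sub_distrib]
  exact sub_eq_zero.2 (sum_runnerUps_maxSet_swap p l x fun n => 1 / (n * (n + 1)))

theorem majorityProb_succ (p : Fin m → ℝ) (N : ℕ) (l : Fin m) :
    majorityProb p (N + 1) l
      = ∑ ω : Fin N → Fin m, ∑ x,
          p x * weight p ω * share l (Fin.cons x ω : Fin (N + 1) → Fin m) := by
  change ∑ ω, weight p ω * share l ω = _
  rw [← (Fin.consEquiv fun _ => Fin m).sum_comp, Fintype.sum_prod_type, sum_comm]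
  refine sum_congr rfl fun ω _ => sum_congr rfl fun x _ => ?_
  change weight p (Fin.cons x ω : Fin (N + 1) → Fin m) * share l (Fin.cons x ω) = _
  rw [weight_cons]

theorem majorityProb_succ_sub {p : Fin m → ℝ} (hsum : ∑ j, p j = 1) (N : ℕ) (l : Fin m) :
    majorityProb p (N + 1) l - majorityProb p N l
      = ∑ ω : Fin N → Fin m, weight p ω *
          ∑ x, p x * (share l (Fin.cons x ω : Fin (N + 1) → Fin m) - share l ω) := by
  change _ - ∑ ω, weight p ω * share l ω = _
  rw [majorityProb_succ, ← sum_sub_distrib]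
  refine sum_congr rfl fun ω _ => ?_
  have hshare : weight p ω * share l ω = ∑ x, p x * weight p ω * share l ω := by
    rw [← sum_mul, ← sum_mul, hsum, one_mul]
  rw [hshare, ← sum_sub_distrib, mul_sum]
  exact sum_congr rfl fun x _ => by ring

theorem majorityProb_monotone {p : Fin m → ℝ} {l : Fin m} (hnn : ∀ j, 0 ≤ p j)
    (hsum : ∑ j, p j = 1) (hmax : ∀ j, p j ≤ p l) : Monotone (majorityProb p · l) := by
  have : Nonempty (Fin m) := ⟨l⟩
  refine monotone_nat_of_le_succ fun N => sub_nonneg.1 ?_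
  simp only [majorityProb_succ_sub hsum, sum_mul_share_cons_sub, mul_add, sum_add_distrib,
    sum_weight_mul_sum_runnerUps_eq_zero, add_zero]
  exact sum_nonneg fun ω _ =>
    mul_nonneg (weight_nonneg hnn ω) (sum_maxSet_mul_sub_share_nonneg hmax ω)

/-- For an easy question (`a_1` is the unique most likely answer),
the majority-vote success probability is non-decreasing in the sample size `N`. -/
theorem easy_question_monotone {m : ℕ} (hm : 0 < m) (p : Fin m → ℝ)
    (hnn : ∀ j, 0 ≤ p j) (hsum : ∑ j, p j = 1)
    (heasy : ∀ j, j ≠ (⟨0, hm⟩ : Fin m) → p j < p ⟨0, hm⟩) :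
    Monotone (fun N => majorityProb p N ⟨0, hm⟩) :=
  majorityProb_monotone hnn hsum fun j => by
    rcases eq_or_ne j ⟨0, hm⟩ with rfl | hj
    exacts [le_rfl, (heasy j hj).le]
end

section
/- Let p_max = max_j p_j and S = {j : p_j = p_max}. If 1 ∈ S and |S| > 1 (a 'moderate question'), then the majority-vote success probability Pr(a_1 | p; N) is non-decreasing as a function of the sample size N. -/
/-
Write `E n g` for the expectation of `g` over `n` i.i.d. samples and `h ω` for the mean of `f` over
the answers tied for the majority in `ω`; for `f` the indicator of `a₁` this is the success
probability. Leaving out any one of `n + 1` exchangeable samples leaves `n` samples, so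
`(n + 1) (E (n+1) h - E n h) = E (n+1) [∑ i, (h ω - h (ω without sample i))]`. The inner sum
vanishes unless `ω` has a unique winner `k`; then it is `∑ x, w ω k x * (f k - f x)` over the
answers `x` that tie with `k` once a sample of `k` is dropped. Relabelling `k ↔ x` pairs the
terms with opposite signs, and the likelihood ratio `p x / p k` makes the sum nonnegative as soon
as `f` increases with `p`, which the indicator of a most likely answer does.
-/

open Finset Filter

open scoped BigOperators

theorem Finset.sum_expect_erase {ι K : Type*} [DecidableEq ι] [Field K] [CharZero K]
    {A : Finset ι} (hA : 1 < #A) (f : ι → K) :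
    ∑ a ∈ A, 𝔼 j ∈ A.erase a, f j = ∑ j ∈ A, f j := by
  have hA' : (#A : K) - 1 ≠ 0 := sub_ne_zero.2 (by exact_mod_cast hA.ne')
  calc ∑ a ∈ A, 𝔼 j ∈ A.erase a, f j
      = ∑ a ∈ A, (∑ j ∈ A, f j - f a) / (#A - 1) :=
        sum_congr rfl fun a ha => by
          rw [expect_eq_sum_div_card, sum_erase_eq_sub ha, card_erase_of_mem ha,
            Nat.cast_sub (one_le_two.trans hA), Nat.cast_one]
    _ = ∑ j ∈ A, f j := by
        rw [← sum_div, sum_sub_distrib, sum_const, nsmul_eq_mul, div_eq_iff hA']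
        ring

namespace MajorityVote

variable {m n : ℕ}

lemma mem_maxSet {ω : Fin n → Fin m} {j : Fin m} :
    j ∈ maxSet ω ↔ ∀ k, count ω k ≤ count ω j := by
  simp [maxSet]

@[to_additive]
lemma prod_comp_eq_prod_pow_count {M : Type*} [CommMonoid M] (g : Fin m → M)
    (ω : Fin n → Fin m) : ∏ i, g (ω i) = ∏ k, g k ^ count ω k := by
  rw [← prod_fiberwise' univ ω g]
  exact prod_congr rfl fun k _ => prod_const _

lemma count_comp_succAbove_add (ω : Fin (n + 1) → Fin m) (i : Fin (n + 1)) (k : Fin m) :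
    count (ω ∘ i.succAbove) k + (if ω i = k then 1 else 0) = count ω k := by
  simp only [count, card_filter, Fin.sum_univ_succAbove _ i, Function.comp_apply]
  exact Nat.add_comm _ _

lemma count_comp_succAbove_of_ne {ω : Fin (n + 1) → Fin m} {i : Fin (n + 1)} {k : Fin m}
    (hk : ω i ≠ k) : count (ω ∘ i.succAbove) k = count ω k := by
  simpa [hk] using count_comp_succAbove_add ω i k

lemma count_comp_succAbove_self (ω : Fin (n + 1) → Fin m) (i : Fin (n + 1)) :
    count (ω ∘ i.succAbove) (ω i) + 1 = count ω (ω i) := by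
  simpa using count_comp_succAbove_add ω i (ω i)

lemma count_comp_succAbove_le (ω : Fin (n + 1) → Fin m) (i : Fin (n + 1)) (k : Fin m) :
    count (ω ∘ i.succAbove) k ≤ count ω k :=
  (Nat.le_add_right _ _).trans (count_comp_succAbove_add ω i k).le

lemma maxSet_nonempty (ω : Fin (n + 1) → Fin m) : (maxSet ω).Nonempty := by
  have : Nonempty (Fin m) := ⟨ω 0⟩
  obtain ⟨j, -, hj⟩ := exists_max_image univ (count ω) univ_nonempty
  exact ⟨j, mem_maxSet.2 fun k => hj k (mem_univ k)⟩

lemma count_eq_of_mem_maxSet {ω : Fin n → Fin m} {j k : Fin m}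
    (hj : j ∈ maxSet ω) (hk : k ∈ maxSet ω) : count ω j = count ω k :=
  le_antisymm (mem_maxSet.1 hk j) (mem_maxSet.1 hj k)

/-- The answers that tie for the maximum once one sample of the unique most frequent
answer `k` is removed. -/
def nearMaxSet (ω : Fin n → Fin m) (k : Fin m) : Finset (Fin m) :=
  univ.filter fun x => x = k ∨ count ω x + 1 = count ω k

lemma mem_nearMaxSet {ω : Fin n → Fin m} {k x : Fin m} :
    x ∈ nearMaxSet ω k ↔ x = k ∨ count ω x + 1 = count ω k := by
  simp [nearMaxSet]

lemma maxSet_comp_succAbove_of_notMem {ω : Fin (n + 1) → Fin m} {i : Fin (n + 1)}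
    (h : ω i ∉ maxSet ω) : maxSet (ω ∘ i.succAbove) = maxSet ω := by
  obtain ⟨j, hj⟩ := maxSet_nonempty ω
  have hjdel : count (ω ∘ i.succAbove) j = count ω j :=
    count_comp_succAbove_of_ne fun e => h (e ▸ hj)
  ext k
  rw [mem_maxSet, mem_maxSet]
  constructor
  · intro hk k'
    have := hk j
    have := count_comp_succAbove_le ω i k
    have := mem_maxSet.1 hj k'
    omega
  · intro hk k'
    have hki : ω i ≠ k := fun e => h (e ▸ mem_maxSet.2 hk)
    rw [count_comp_succAbove_of_ne hki]
    exact (count_comp_succAbove_le ω i k').trans (hk k')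

lemma maxSet_comp_succAbove_of_mem {ω : Fin (n + 1) → Fin m} {i : Fin (n + 1)}
    (h : ω i ∈ maxSet ω) (hcard : 1 < #(maxSet ω)) :
    maxSet (ω ∘ i.succAbove) = (maxSet ω).erase (ω i) := by
  obtain ⟨j, hj, hji⟩ := exists_mem_ne hcard (ω i)
  have hjdel := count_comp_succAbove_of_ne (i := i) (Ne.symm hji)
  have := count_eq_of_mem_maxSet hj h
  have := count_comp_succAbove_self ω i
  ext k
  rw [mem_maxSet, mem_erase, mem_maxSet]
  constructor
  · intro hk
    have := hk j
    have := count_comp_succAbove_le ω i k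
    have := mem_maxSet.1 h k
    refine ⟨by rintro rfl; omega, fun k' => ?_⟩
    have := mem_maxSet.1 h k'
    omega
  · rintro ⟨hki, hk⟩ k'
    rw [count_comp_succAbove_of_ne (Ne.symm hki)]
    exact (count_comp_succAbove_le ω i k').trans (hk k')

lemma maxSet_comp_succAbove_of_eq_singleton {ω : Fin (n + 1) → Fin m} {i : Fin (n + 1)}
    (h : maxSet ω = {ω i}) : maxSet (ω ∘ i.succAbove) = nearMaxSet ω (ω i) := by
  have hlt : ∀ k, k ≠ ω i → count ω k < count ω (ω i) := by
    intro k hk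
    have hk' : k ∉ maxSet ω := by simpa [h] using hk
    obtain ⟨k', hk'⟩ := not_forall.1 (mt mem_maxSet.2 hk')
    exact (not_le.1 hk').trans_le (mem_maxSet.1 (h ▸ mem_singleton_self _) k')
  have := count_comp_succAbove_self ω i
  ext k
  rw [mem_maxSet, mem_nearMaxSet]
  rcases eq_or_ne k (ω i) with rfl | hk
  · refine iff_of_true (fun k' => ?_) (Or.inl rfl)
    rcases eq_or_ne k' (ω i) with rfl | hk'
    · exact le_rfl
    · have := count_comp_succAbove_le ω i k'
      have := hlt k' hk'
      omega
  · rw [count_comp_succAbove_of_ne (Ne.symm hk), or_iff_right hk]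
    constructor
    · intro hmax
      have := hmax (ω i)
      have := hlt k hk
      omega
    · intro hk1 k'
      rcases eq_or_ne k' (ω i) with rfl | hk'
      · omega
      · have := count_comp_succAbove_le ω i k'
        have := hlt k' hk'
        omega

lemma count_perm_comp (σ : Equiv.Perm (Fin m)) (ω : Fin n → Fin m) (k : Fin m) :
    count (σ ∘ ω) k = count ω (σ.symm k) := by
  simp only [count, Function.comp_apply, ← Equiv.eq_symm_apply]

lemma maxSet_perm_comp (σ : Equiv.Perm (Fin m)) (ω : Fin n → Fin m) :
    maxSet (σ ∘ ω) = (maxSet ω).map σ.toEmbedding := by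
  ext j
  simp only [mem_map_equiv, mem_maxSet, count_perm_comp]
  exact ⟨fun h k => by simpa using h (σ k), fun h k => h _⟩

lemma nearMaxSet_perm_comp (σ : Equiv.Perm (Fin m)) (ω : Fin n → Fin m) (k : Fin m) :
    nearMaxSet (σ ∘ ω) (σ k) = (nearMaxSet ω k).map σ.toEmbedding := by
  ext x
  simp only [mem_map_equiv, mem_nearMaxSet, count_perm_comp, Equiv.symm_apply_apply,
    Equiv.symm_apply_eq]

/-- The weight of the pair `(k, x)` in the leave-one-out sum: `ω` has the unique winner `k`, and
`x` ties with it once a sample of `k` is removed. -/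
noncomputable def flipWeight (ω : Fin n → Fin m) (k x : Fin m) : ℝ :=
  if maxSet ω = {k} ∧ x ∈ nearMaxSet ω k then count ω k / #(nearMaxSet ω k) else 0

lemma flipWeight_nonneg (ω : Fin n → Fin m) (k x : Fin m) : 0 ≤ flipWeight ω k x := by
  unfold flipWeight
  split_ifs <;> positivity

lemma flipWeight_perm_comp (σ : Equiv.Perm (Fin m)) (ω : Fin n → Fin m) (k x : Fin m) :
    flipWeight (σ ∘ ω) (σ k) (σ x) = flipWeight ω k x := by
  have hsingle : (maxSet ω).map σ.toEmbedding = {σ k} ↔ maxSet ω = {k} := by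
    rw [← Equiv.coe_toEmbedding, ← map_singleton, Finset.map_inj]
  simp only [flipWeight, maxSet_perm_comp, nearMaxSet_perm_comp, count_perm_comp, hsingle,
    mem_map_equiv, card_map, Equiv.symm_apply_apply]

lemma exists_prod_swap_eq {p : Fin m → ℝ} (hp : ∀ j, 0 ≤ p j) {ω : Fin n → Fin m} {k x : Fin m}
    (hkx : k ≠ x) (hcount : count ω k = count ω x + 1) :
    ∃ Q, 0 ≤ Q ∧ ∏ i, p (ω i) = Q * p k ∧ ∏ i, p (Equiv.swap k x (ω i)) = Q * p x := by
  have hsplit : ∀ g : Fin m → ℝ,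
      ∏ j, g j = g k * g x * ∏ j ∈ (univ.erase k).erase x, g j := fun g => by
    rw [mul_assoc, mul_prod_erase _ _ (mem_erase.2 ⟨hkx.symm, mem_univ x⟩),
      mul_prod_erase _ _ (mem_univ k)]
  set R := ∏ j ∈ (univ.erase k).erase x, p j ^ count ω j
  have hrest : ∏ j ∈ (univ.erase k).erase x, p (Equiv.swap k x j) ^ count ω j = R :=
    prod_congr rfl fun j hj => by
      obtain ⟨hjx, hjk, -⟩ := mem_erase.1 hj |>.imp_right mem_erase.1
      rw [Equiv.swap_apply_of_ne_of_ne hjk hjx]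
  have hR : 0 ≤ R := prod_nonneg fun j _ => pow_nonneg (hp j) _
  refine ⟨R * (p k * p x) ^ count ω x, by have := hp k; have := hp x; positivity, ?_, ?_⟩
  · rw [prod_comp_eq_prod_pow_count, hsplit, hcount]
    ring
  · rw [prod_comp_eq_prod_pow_count (fun j => p (Equiv.swap k x j)), hsplit, hrest, hcount,
      Equiv.swap_apply_left, Equiv.swap_apply_right]
    ring

lemma flipWeight_mul_nonneg {p f : Fin m → ℝ} (hp : ∀ j, 0 ≤ p j) (hf : Monovary f p)
    (ω : Fin n → Fin m) (k x : Fin m) :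
    0 ≤ flipWeight ω k x *
      ((f k - f x) * (∏ i, p (ω i) - ∏ i, p (Equiv.swap k x (ω i)))) := by
  by_cases hw : maxSet ω = {k} ∧ x ∈ nearMaxSet ω k
  · refine mul_nonneg (flipWeight_nonneg ω k x) ?_
    rcases mem_nearMaxSet.1 hw.2 with rfl | hcount
    · simp
    obtain ⟨Q, hQ, hω, hσω⟩ := exists_prod_swap_eq hp (k := k) (x := x)
      (fun e => by simp [e] at hcount) hcount.symm
    rw [hω, hσω, ← mul_sub, mul_left_comm]
    exact mul_nonneg hQ (hf.sub_mul_sub_nonneg x k)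
  · simp [flipWeight, hw]

noncomputable def iidExpectation (p : Fin m → ℝ) (n : ℕ) (g : (Fin n → Fin m) → ℝ) : ℝ :=
  ∑ ω : Fin n → Fin m, (∏ i, p (ω i)) * g ω

/-- Relabelling `k ↔ x` in `ω` maps the term `(ω, k, x)` to `(swap k x ∘ ω, x, k)`, which has
the same weight and the opposite sign; for `f` monovarying with `p` the more likely of the two
configurations carries the nonnegative sign. -/
lemma iidExpectation_flipWeight_nonneg {p f : Fin m → ℝ} (hp : ∀ j, 0 ≤ p j)
    (hf : Monovary f p) (n : ℕ) :
    0 ≤ iidExpectation p n fun ω => ∑ k, ∑ x, flipWeight ω k x * (f k - f x) := by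
  set F : (Fin n → Fin m) × Fin m × Fin m → ℝ := fun z =>
    (∏ i, p (z.1 i)) * (flipWeight z.1 z.2.1 z.2.2 * (f z.2.1 - f z.2.2))
  have hF : iidExpectation p n (fun ω => ∑ k, ∑ x, flipWeight ω k x * (f k - f x)) = ∑ z, F z := by
    simp only [iidExpectation, F, Fintype.sum_prod_type, mul_sum]
  let Φ : Equiv.Perm ((Fin n → Fin m) × Fin m × Fin m) :=
    Function.Involutive.toPerm (fun z => (Equiv.swap z.2.1 z.2.2 ∘ z.1, z.2.2, z.2.1))
      fun z => by ext <;> simp [Equiv.swap_comm z.2.2 z.2.1]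
  have hpair : ∀ z, 0 ≤ F z + F (Φ z) := by
    rintro ⟨ω, k, x⟩
    have hw := flipWeight_perm_comp (Equiv.swap k x) ω k x
    rw [Equiv.swap_apply_left, Equiv.swap_apply_right] at hw
    have hΦz : Φ (ω, k, x) = (Equiv.swap k x ∘ ω, x, k) := rfl
    convert flipWeight_mul_nonneg hp hf ω k x using 1
    simp only [F, hΦz, Function.comp_apply, hw]
    ring
  have hΦ : ∑ z, F (Φ z) = ∑ z, F z := Equiv.sum_comp Φ F
  have := sum_nonneg fun z (_ : z ∈ univ) => hpair z
  rw [sum_add_distrib, hΦ] at this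
  linarith

lemma iidExpectation_comp_succAbove {p : Fin m → ℝ} (hsum : ∑ j, p j = 1) (i : Fin (n + 1))
    (g : (Fin n → Fin m) → ℝ) :
    iidExpectation p (n + 1) (fun ω => g (ω ∘ i.succAbove)) = iidExpectation p n g := by
  have hcomp : ∀ x ω, Fin.insertNthEquiv (fun _ => Fin m) i (x, ω) ∘ i.succAbove = ω :=
    fun x ω => Fin.insertNth_comp_succAbove i x ω
  simp only [iidExpectation, ← (Fin.insertNthEquiv (fun _ => Fin m) i).sum_comp,
    Fintype.sum_prod_type, hcomp, Fin.insertNthEquiv_apply, Fin.prod_univ_succAbove _ i,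
    Fin.insertNth_apply_same, Fin.insertNth_apply_succAbove, mul_assoc, ← mul_sum, ← sum_mul,
    hsum, one_mul]

lemma natCast_add_one_mul_iidExpectation_sub {p : Fin m → ℝ} (hsum : ∑ j, p j = 1)
    (G : (Fin (n + 1) → Fin m) → ℝ) (g : (Fin n → Fin m) → ℝ) :
    (n + 1) * (iidExpectation p (n + 1) G - iidExpectation p n g) =
      iidExpectation p (n + 1) fun ω => ∑ i : Fin (n + 1), (G ω - g (ω ∘ i.succAbove)) := by
  calc (n + 1) * (iidExpectation p (n + 1) G - iidExpectation p n g)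
      = ∑ i : Fin (n + 1), (iidExpectation p (n + 1) G -
          iidExpectation p (n + 1) fun ω => g (ω ∘ i.succAbove)) := by
        simp [iidExpectation_comp_succAbove hsum, mul_sub]
    _ = _ := by
        simp only [iidExpectation, ← sum_sub_distrib, ← mul_sub, mul_sum]
        exact sum_comm

/-- The expected value of `f` at the answer returned by the majority vote on `ω`, ties being
broken uniformly. -/
noncomputable def majorityMean (f : Fin m → ℝ) (ω : Fin n → Fin m) : ℝ :=
  𝔼 j ∈ maxSet ω, f j

lemma sum_majorityMean_sub_comp_succAbove_of_eq_singleton (f : Fin m → ℝ)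
    {ω : Fin (n + 1) → Fin m} {k : Fin m} (h : maxSet ω = {k}) :
    ∑ i : Fin (n + 1), (majorityMean f ω - majorityMean f (ω ∘ i.succAbove)) =
      ∑ k, ∑ x, flipWeight ω k x * (f k - f x) := by
  have hterm : ∀ i, majorityMean f ω - majorityMean f (ω ∘ i.succAbove) =
      if ω i = k then f k - 𝔼 x ∈ nearMaxSet ω k, f x else 0 := by
    intro i
    by_cases hi : ω i = k
    · rw [if_pos hi, majorityMean, majorityMean,
        maxSet_comp_succAbove_of_eq_singleton (h.trans (by rw [hi])), h, hi, expect_singleton]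
    · rw [if_neg hi, majorityMean, majorityMean,
        maxSet_comp_succAbove_of_notMem (by simpa [h] using hi), sub_self]
  have hother : ∀ k' ≠ k, ∑ x, flipWeight ω k' x * (f k' - f x) = 0 := fun k' hk' =>
    sum_eq_zero fun x _ => by simp [flipWeight, h, Ne.symm hk']
  have hk : k ∈ nearMaxSet ω k := mem_nearMaxSet.2 (Or.inl rfl)
  rw [sum_congr rfl fun i _ => hterm i, sum_eq_single k (fun k' _ => hother k') (by simp),
    sum_ite, sum_const_zero, add_zero, sum_const, nsmul_eq_mul]
  simp only [flipWeight, h, true_and, ite_mul, zero_mul, sum_ite_mem, univ_inter]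
  have hmean : f k - 𝔼 x ∈ nearMaxSet ω k, f x =
      (∑ x ∈ nearMaxSet ω k, (f k - f x)) / #(nearMaxSet ω k) := by
    rw [expect_eq_sum_div_card, sum_sub_distrib, sum_const, nsmul_eq_mul,
      sub_div, mul_div_cancel_left₀ _ (by exact_mod_cast (card_pos.2 ⟨k, hk⟩).ne')]
  rw [← mul_sum, hmean, div_mul_eq_mul_div, mul_div_assoc]
  rfl

lemma sum_majorityMean_sub_comp_succAbove_of_one_lt_card (f : Fin m → ℝ)
    {ω : Fin (n + 1) → Fin m} (h : 1 < #(maxSet ω)) :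
    ∑ i : Fin (n + 1), (majorityMean f ω - majorityMean f (ω ∘ i.succAbove)) = 0 := by
  set J := maxSet ω
  obtain ⟨j, hj⟩ := maxSet_nonempty ω
  have hterm : ∀ i, majorityMean f ω - majorityMean f (ω ∘ i.succAbove) =
      if ω i ∈ J then 𝔼 x ∈ J, f x - 𝔼 x ∈ J.erase (ω i), f x else 0 := by
    intro i
    by_cases hi : ω i ∈ J
    · rw [if_pos hi, majorityMean, majorityMean, maxSet_comp_succAbove_of_mem hi h]
    · rw [if_neg hi, majorityMean, majorityMean, maxSet_comp_succAbove_of_notMem hi, sub_self]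
  have hcount : ∀ a ∈ J, count ω a = count ω j := fun a ha => count_eq_of_mem_maxSet ha hj
  rw [sum_congr rfl fun i _ => hterm i, sum_comp_eq_sum_nsmul_count
      (fun a => if a ∈ J then 𝔼 x ∈ J, f x - 𝔼 x ∈ J.erase a, f x else 0)]
  simp only [smul_ite, smul_zero, sum_ite_mem, univ_inter]
  rw [sum_congr rfl fun a ha => by rw [hcount a ha], ← smul_sum, sum_sub_distrib, sum_const,
    card_smul_expect, sum_expect_erase h, sub_self, smul_zero]

lemma sum_majorityMean_sub_comp_succAbove (f : Fin m → ℝ) (ω : Fin (n + 1) → Fin m) :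
    ∑ i : Fin (n + 1), (majorityMean f ω - majorityMean f (ω ∘ i.succAbove)) =
      ∑ k, ∑ x, flipWeight ω k x * (f k - f x) := by
  obtain ⟨k, hk⟩ | hJ := (maxSet_nonempty ω).exists_eq_singleton_or_nontrivial
  · exact sum_majorityMean_sub_comp_succAbove_of_eq_singleton f hk
  · have hw : ∀ k x, flipWeight ω k x = 0 := fun k x => by
      simp [flipWeight, hJ.ne_singleton]
    simp [sum_majorityMean_sub_comp_succAbove_of_one_lt_card f (one_lt_card_iff_nontrivial.2 hJ),
      hw]

theorem monotone_iidExpectation_majorityMean {p f : Fin m → ℝ} (hp : ∀ j, 0 ≤ p j)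
    (hsum : ∑ j, p j = 1) (hf : Monovary f p) :
    Monotone fun n => iidExpectation p n (majorityMean f) := by
  refine monotone_nat_of_le_succ fun n => ?_
  have hgap :=
    natCast_add_one_mul_iidExpectation_sub (n := n) hsum (majorityMean f) (majorityMean f)
  simp only [sum_majorityMean_sub_comp_succAbove] at hgap
  have := hgap ▸ iidExpectation_flipWeight_nonneg hp hf (n + 1)
  exact sub_nonneg.1 (nonneg_of_mul_nonneg_right this (by positivity))

lemma majorityProb_eq_iidExpectation (p : Fin m → ℝ) (n : ℕ) (l : Fin m) :
    majorityProb p n l = iidExpectation p n (majorityMean fun j => if j = l then 1 else 0) := by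
  refine sum_congr rfl fun ω _ => ?_
  rw [majorityMean, expect_eq_sum_div_card, sum_ite_eq', ite_div, zero_div]

lemma monovary_indicator_of_isMax {p : Fin m → ℝ} {l : Fin m} (hl : ∀ k, p k ≤ p l) :
    Monovary (fun j => if j = l then (1 : ℝ) else 0) p := by
  intro i j hij
  by_cases hj : j = l
  · simp only [hj, if_true]
    split_ifs <;> norm_num
  · have hi : i ≠ l := by rintro rfl; exact (hij.trans_le (hl j)).false
    simp [hi, hj]

end MajorityVote

theorem moderate_question_monotone_general {m : ℕ} (hm : 0 < m) (p : Fin m → ℝ)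
    (hnn : ∀ j, 0 ≤ p j) (hsum : ∑ j, p j = 1)
    (S : Finset (Fin m)) (hS : S = Finset.univ.filter fun j => ∀ k, p k ≤ p j)
    (hmem : (⟨0, hm⟩ : Fin m) ∈ S) :
    Monotone (fun N => majorityProb p N ⟨0, hm⟩) := by
  have hmax : ∀ k, p k ≤ p ⟨0, hm⟩ := (mem_filter.1 (hS ▸ hmem)).2
  simp only [MajorityVote.majorityProb_eq_iidExpectation]
  exact MajorityVote.monotone_iidExpectation_majorityMean hnn hsum
    (MajorityVote.monovary_indicator_of_isMax hmax)

/-- For a moderate question (`a_1` is among the `|S| > 1` most likely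
answers), the majority-vote success probability is non-decreasing in `N`. -/
theorem moderate_question_monotone {m : ℕ} (hm : 0 < m) (p : Fin m → ℝ)
    (hnn : ∀ j, 0 ≤ p j) (hsum : ∑ j, p j = 1)
    (S : Finset (Fin m)) (hS : S = Finset.univ.filter fun j => ∀ k, p k ≤ p j)
    (hmem : (⟨0, hm⟩ : Fin m) ∈ S) (hcard : 1 < S.card) :
    Monotone (fun N => majorityProb p N ⟨0, hm⟩) :=
  moderate_question_monotone_general hm p hnn hsum S hS hmem
end

section
/- If there exists an index q ≠ 1 with p_q > p_1 (i.e., a_1 is not a most likely answer; a 'hard question'), then the majority-vote success probability Pr(a_1 | p; N) tends to 0 as N → ∞. -/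
/-!
If answer `0` is among the most frequent in a sample sequence, its count `x` is at least the
count `y` of `q`, so `p 0 ^ x * p q ^ y ≤ √(p 0 * p q) ^ (x + y)`. Hence replacing both `p 0` and
`p q` by their geometric mean gives weights that dominate `p` on every sequence where `0` can win,
and the success probability is at most `s ^ N`, where `s = 1 - (√(p q) - √(p 0))² < 1` is the
total mass of the new weights.
-/

open Finset Filter

section Counting

variable {m N : ℕ}

lemma prod_eq_prod_pow_count {M : Type*} [CommMonoid M] (f : Fin m → M) (ω : Fin N → Fin m) :
    ∏ i, f (ω i) = ∏ j, f j ^ count ω j := by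
  rw [← prod_fiberwise' univ ω f]
  exact prod_congr rfl fun j _ => by rw [prod_const, count]

lemma count_le_of_mem_maxSet {ω : Fin N → Fin m} {l : Fin m} (hl : l ∈ maxSet ω) (k : Fin m) :
    count ω k ≤ count ω l :=
  (mem_filter.mp hl).2 k

end Counting

section MajorityProb

variable {m : ℕ} {p : Fin m → ℝ}

lemma majorityProb_nonneg (hnn : ∀ j, 0 ≤ p j) (N : ℕ) (l : Fin m) :
    0 ≤ majorityProb p N l :=
  sum_nonneg fun _ _ => mul_nonneg (prod_nonneg fun _ _ => hnn _) (by split_ifs <;> positivity)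

lemma majorityProb_le_pow_sum {r : Fin m → ℝ} (hnn : ∀ j, 0 ≤ p j) (hr : ∀ j, 0 ≤ r j)
    {l q : Fin m} (N : ℕ)
    (hdom : ∀ ω : Fin N → Fin m, count ω q ≤ count ω l → ∏ i, p (ω i) ≤ ∏ i, r (ω i)) :
    majorityProb p N l ≤ (∑ j, r j) ^ N := by
  rw [Fintype.sum_pow]
  refine sum_le_sum fun ω _ => ?_
  split_ifs with hl
  · have hcard : (1 : ℝ) ≤ (maxSet ω).card := by exact_mod_cast card_pos.mpr ⟨l, hl⟩
    calc (∏ i, p (ω i)) * (1 / ((maxSet ω).card : ℝ)) ≤ ∏ i, p (ω i) :=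
          mul_le_of_le_one_right (prod_nonneg fun _ _ => hnn _)
            (div_le_one_of_le₀ hcard (by positivity))
      _ ≤ ∏ i, r (ω i) := hdom ω (count_le_of_mem_maxSet hl q)
  · rw [mul_zero]
    exact prod_nonneg fun _ _ => hr _

end MajorityProb

lemma pow_mul_pow_le_sqrt_mul_pow {a b : ℝ} (ha : 0 ≤ a) (hab : a ≤ b) {x y : ℕ} (hyx : y ≤ x) :
    a ^ x * b ^ y ≤ √(a * b) ^ (x + y) := by
  have hab' : 0 ≤ a * b := mul_nonneg ha (ha.trans hab)
  have ha_le : a ≤ √(a * b) := Real.le_sqrt_of_sq_le (by nlinarith)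
  obtain ⟨d, rfl⟩ := Nat.exists_eq_add_of_le hyx
  calc a ^ (y + d) * b ^ y = (a * b) ^ y * a ^ d := by ring
    _ ≤ (a * b) ^ y * √(a * b) ^ d := by gcongr
    _ = √(a * b) ^ (y + d + y) := by
      rw [show y + d + y = 2 * y + d by ring, pow_add, pow_mul, Real.sq_sqrt hab']

section GeomMerge

variable {m : ℕ} (p : Fin m → ℝ) (z q : Fin m)

noncomputable def geomMerge : Fin m → ℝ :=
  fun j => if j = z ∨ j = q then √(p z * p q) else p j

variable {p z q}

lemma geomMerge_nonneg (hnn : ∀ j, 0 ≤ p j) (j : Fin m) : 0 ≤ geomMerge p z q j := by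
  unfold geomMerge
  split_ifs
  exacts [Real.sqrt_nonneg _, hnn j]

lemma geomMerge_eq_of_mem_compl {j : Fin m} (hj : j ∈ ({z, q} : Finset (Fin m))ᶜ) :
    geomMerge p z q j = p j := by
  simp only [mem_compl, mem_insert, mem_singleton] at hj
  simp only [geomMerge, if_neg hj]

lemma sum_geomMerge (hz : 0 ≤ p z) (hq : 0 ≤ p q) (hzq : z ≠ q) :
    ∑ j, geomMerge p z q j = ∑ j, p j - (√(p q) - √(p z)) ^ 2 := by
  rw [← sum_add_sum_compl {z, q}, ← sum_add_sum_compl {z, q} p, sum_pair hzq, sum_pair hzq,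
    sum_congr rfl fun j hj => geomMerge_eq_of_mem_compl hj]
  simp only [geomMerge, true_or, or_true, if_true]
  rw [Real.sqrt_mul hz, sub_sq, Real.sq_sqrt hz, Real.sq_sqrt hq]
  ring

lemma prod_le_prod_geomMerge (hnn : ∀ j, 0 ≤ p j) (hle : p z ≤ p q) (hzq : z ≠ q)
    {N : ℕ} {ω : Fin N → Fin m} (hcount : count ω q ≤ count ω z) :
    ∏ i, p (ω i) ≤ ∏ i, geomMerge p z q (ω i) := by
  have hrest : ∏ j ∈ {z, q}ᶜ, geomMerge p z q j ^ count ω j = ∏ j ∈ {z, q}ᶜ, p j ^ count ω j :=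
    prod_congr rfl fun j hj => by rw [geomMerge_eq_of_mem_compl hj]
  rw [prod_eq_prod_pow_count, prod_eq_prod_pow_count, ← prod_mul_prod_compl {z, q},
    ← prod_mul_prod_compl {z, q} (fun j => geomMerge p z q j ^ count ω j), hrest, prod_pair hzq,
    prod_pair hzq]
  refine mul_le_mul_of_nonneg_right ?_ (prod_nonneg fun j _ => pow_nonneg (hnn j) _)
  simp only [geomMerge, true_or, or_true, if_true, ← pow_add]
  exact pow_mul_pow_le_sqrt_mul_pow (hnn z) hle hcount

end GeomMerge

/-- For a hard question (some wrong answer `a_q` is strictly more likely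
than `a_1`), the majority-vote success probability tends to `0` as `N → ∞`. -/
theorem hard_question_tendsto_zero {m : ℕ} (hm : 0 < m) (p : Fin m → ℝ)
    (hnn : ∀ j, 0 ≤ p j) (hsum : ∑ j, p j = 1)
    (hhard : ∃ q : Fin m, q ≠ (⟨0, hm⟩ : Fin m) ∧ p ⟨0, hm⟩ < p q) :
    Tendsto (fun N => majorityProb p N ⟨0, hm⟩) atTop (nhds 0) := by
  obtain ⟨q, hq, hlt⟩ := hhard
  set z : Fin m := ⟨0, hm⟩
  set s := ∑ j, geomMerge p z q j with hs
  have hs_nonneg : 0 ≤ s := sum_nonneg fun j _ => geomMerge_nonneg hnn j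
  have hs_lt_one : s < 1 := by
    have hgap : 0 < √(p q) - √(p z) := sub_pos.mpr (Real.sqrt_lt_sqrt (hnn z) hlt)
    rw [hs, sum_geomMerge (hnn z) (hnn q) hq.symm, hsum]
    exact sub_lt_self 1 (pow_pos hgap 2)
  have hbound (N : ℕ) : majorityProb p N z ≤ s ^ N :=
    majorityProb_le_pow_sum hnn (geomMerge_nonneg hnn) N fun _ =>
      prod_le_prod_geomMerge hnn hlt.le hq.symm
  exact squeeze_zero (majorityProb_nonneg hnn · z) hbound
    (tendsto_pow_atTop_nhds_zero_of_lt_one hs_nonneg hs_lt_one)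
end
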